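/- Let A > 2 and q_{A-1} = 2^{2(A-1)} + 2^{2(A-2)} + ⋯ + 2^2 + 2^0 = ∑_{j=0}^{A-1} 4^j. Then for all m with 0 ≤ m ≤ A−3, all s with m+2 ≤ s ≤ A−1, and all x in the dyadic interval I_{2A}(0,…,0, x_{2m}=1, 0,…,0, x_{2s}=1, x_{2s+1}, …, x_{2A-1}) (i.e. x_j = 0 for j < 2s except x_{2m} = 1, and x_{2s} = 1), one has q_{A-1}·|K_{q_{A-1}}^w(x)| ≥ 2^{2m+2s−3}. -/

import Mathlib

open MeasureTheory Filter Finset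
open scoped ENNReal NNReal

/-- The Walsh group `G = ∏ ℤ₂`. -/
abbrev WG := ℕ → ZMod 2

noncomputable section

/-- The `k`-th Rademacher function `r_k(x) = (-1)^{x_k}`. -/
def rad (k : ℕ) (x : WG) : ℝ := (-1 : ℝ) ^ (x k).val

/-- The Walsh-Paley function `w_n(x) = (-1)^{∑ n_k x_k}`. -/
def walsh (n : ℕ) (x : WG) : ℝ :=
  (-1 : ℝ) ^ (∑ k ∈ Finset.range (n + 1), if n.testBit k then (x k).val else 0)

/-- The Walsh-Kaczmarz function
`κ_n(x) = r_{|n|}(x)·(-1)^{∑_{k<|n|} n_k x_{|n|-1-k}}`, `κ_0 = 1`,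
where `|n| = Nat.log 2 n` is the position of the leading binary digit. -/
def kacz (n : ℕ) (x : WG) : ℝ :=
  if n = 0 then 1 else
    rad (Nat.log 2 n) x *
      (-1 : ℝ) ^ (∑ k ∈ Finset.range (Nat.log 2 n),
        if n.testBit k then (x (Nat.log 2 n - 1 - k)).val else 0)

/-- Walsh-Paley Dirichlet kernel. -/
def Dw (n : ℕ) (x : WG) : ℝ := ∑ k ∈ Finset.range n, walsh k x

/-- Walsh-Kaczmarz Dirichlet kernel. -/
def Dk (n : ℕ) (x : WG) : ℝ := ∑ k ∈ Finset.range n, kacz k x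

/-- Walsh-Fejér kernel `K_n = (1/n) ∑_{k=1}^n D_k`. -/
def Kw (n : ℕ) (x : WG) : ℝ := (1 / n : ℝ) * ∑ k ∈ Finset.Icc 1 n, Dw k x

/-- The transformation reversing the first `A` coordinates. -/
def tau (A : ℕ) (x : WG) : WG := fun k => if k < A then x (A - 1 - k) else x k

/-- The dyadic interval (cylinder) `I_n(x)`. -/
def cyl (n : ℕ) (x : WG) : Set WG := {y | ∀ k < n, y k = x k}

/-- `I_n = I_n(0)`. -/
def In (n : ℕ) : Set WG := cyl n 0

/-- A measure `μ` on `WG` is the Haar (product) measure iff every cylinder of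
level `n` has measure `2⁻ⁿ`. -/
def IsHaar (μ : Measure WG) : Prop :=
  ∀ (n : ℕ) (x : WG), μ (cyl n x) = (2 : ℝ≥0∞)⁻¹ ^ n

/-- Walsh-Fourier coefficient. -/
def fhatW (μ : Measure WG) (f : WG → ℝ) (j : ℕ) : ℝ := ∫ x, f x * walsh j x ∂μ

/-- Walsh-Fourier partial sum `S_N f`. -/
def partialW (μ : Measure WG) (N : ℕ) (f : WG → ℝ) (x : WG) : ℝ :=
  ∑ j ∈ Finset.range N, fhatW μ f j * walsh j x

/-- Walsh-Kaczmarz-Fourier coefficient. -/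
def fhatK (μ : Measure WG) (f : WG → ℝ) (j : ℕ) : ℝ := ∫ x, f x * kacz j x ∂μ

/-- Walsh-Kaczmarz-Fourier partial sum `S_N^κ f`. -/
def partialK (μ : Measure WG) (N : ℕ) (f : WG → ℝ) (x : WG) : ℝ :=
  ∑ j ∈ Finset.range N, fhatK μ f j * kacz j x

/-- Walsh-Kaczmarz-Fejér mean `σ_n^κ f`. -/
def sigmaK (μ : Measure WG) (n : ℕ) (f : WG → ℝ) (x : WG) : ℝ :=
  (1 / n : ℝ) * ∑ j ∈ Finset.Icc 1 n, partialK μ j f x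

end

noncomputable section

/-- `q_A = ∑_{j=0}^{A} 4^j`. -/
def qq (A : ℕ) : ℕ := ∑ j ∈ Finset.range (A + 1), 4 ^ j

/-! `n K_n(x)` is the Fejér sum `S(n) = ∑_{k=1}^n D_k(x)`, and the splitting
`q_{t+1} = 4^{t+1} + q_t` gives `S(q_{t+1}) = S(4^{t+1}) + q_t D_{4^{t+1}}(x) + r_{2t+2}(x) S(q_t)`.
At our `x` the Dirichlet kernels `D_{2^i}(x) = ∏_{k<i} (1 + r_k(x))` vanish for `i > 2m`, while
`S(2^i) = 2^{i-1+2m}` for `2m < i ≤ 2s` and `S(2^i) = 0` for `i > 2s`. Hence `S(q_t)` grows by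
`2^{2t-1+2m}` for `m < t < s`; at `t = s` the sign of the old sum flips and the new term
`2^{2s-1+2m}` outweighs it, the start `S(q_m) ≤ q_m²` being negligible; from then on `|S(q_t)|`
stays constant. -/

lemma rad_of_eq_zero {k : ℕ} {x : WG} (h : x k = 0) : rad k x = 1 := by
  simp [rad, h]

lemma rad_of_eq_one {k : ℕ} {x : WG} (h : x k = 1) : rad k x = -1 := by
  simp [rad, h, ZMod.val_one]

lemma abs_rad (k : ℕ) (x : WG) : |rad k x| = 1 := by
  simp [rad]

lemma walsh_le_one (n : ℕ) (x : WG) : walsh n x ≤ 1 := by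
  rcases neg_one_pow_eq_or ℝ (∑ k ∈ range (n + 1), if n.testBit k then (x k).val else 0)
    with h | h <;> simp [walsh, h]

lemma walsh_zero (x : WG) : walsh 0 x = 1 := by
  simp [walsh]

lemma walsh_eq_of_lt_two_pow {n M : ℕ} (hn : n < 2 ^ M) (x : WG) :
    walsh n x = (-1 : ℝ) ^ (∑ k ∈ range M, if n.testBit k then (x k).val else 0) := by
  have range_indep : ∀ {M₁ M₂ : ℕ}, M₁ ≤ M₂ → n < 2 ^ M₁ →
      (∑ k ∈ range M₂, if n.testBit k then (x k).val else 0)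
        = ∑ k ∈ range M₁, if n.testBit k then (x k).val else 0 := by
    intro M₁ M₂ hM hn₁
    refine (sum_subset (range_subset_range.2 hM) fun k _ hk => ?_).symm
    have : n < 2 ^ k :=
      hn₁.trans_le (Nat.pow_le_pow_right two_pos (not_lt.1 (mem_range.not.1 hk)))
    simp [Nat.testBit_lt_two_pow this]
  rw [walsh]
  rcases le_total (n + 1) M with h | h
  · rw [range_indep h (Nat.lt_two_pow_self.trans (Nat.pow_lt_pow_succ one_lt_two))]
  · rw [range_indep h hn]

lemma walsh_two_pow_add {i k : ℕ} (hk : k < 2 ^ i) (x : WG) :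
    walsh (2 ^ i + k) x = rad i x * walsh k x := by
  have hlt : 2 ^ i + k < 2 ^ (i + 1) := by rw [pow_succ]; omega
  rw [walsh_eq_of_lt_two_pow hlt, walsh_eq_of_lt_two_pow hk, sum_range_succ,
    Nat.testBit_two_pow_add_eq, Nat.testBit_lt_two_pow hk, pow_add, rad, mul_comm]
  congr 2
  exact sum_congr rfl fun j hj => by rw [Nat.testBit_two_pow_add_gt (mem_range.1 hj)]

lemma Dw_two_pow_add {i l : ℕ} (hl : l ≤ 2 ^ i) (x : WG) :
    Dw (2 ^ i + l) x = Dw (2 ^ i) x + rad i x * Dw l x := by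
  rw [Dw, Dw, Dw, sum_range_add, mul_sum]
  exact congrArg _ (sum_congr rfl fun j hj => walsh_two_pow_add ((mem_range.1 hj).trans_le hl) x)

lemma Dw_two_pow (i : ℕ) (x : WG) : Dw (2 ^ i) x = ∏ k ∈ range i, (1 + rad k x) := by
  induction i with
  | zero => simp [Dw, walsh_zero]
  | succ i ih => rw [pow_succ, mul_two, Dw_two_pow_add le_rfl, ih, prod_range_succ]; ring

lemma Dw_le (n : ℕ) (x : WG) : Dw n x ≤ n := by
  rw [Dw]
  simpa using sum_le_card_nsmul (range n) (walsh · x) 1 fun k _ => walsh_le_one k x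

lemma Dw_two_pow_of_forall_eq_zero {i : ℕ} {x : WG} (h : ∀ k < i, x k = 0) :
    Dw (2 ^ i) x = 2 ^ i := by
  rw [Dw_two_pow, prod_congr rfl fun k hk => by rw [rad_of_eq_zero (h k (mem_range.1 hk))]]
  norm_num

lemma Dw_two_pow_eq_zero {i j : ℕ} {x : WG} (hj : x j = 1) (hji : j < i) : Dw (2 ^ i) x = 0 := by
  rw [Dw_two_pow]
  exact prod_eq_zero (mem_range.2 hji) (by rw [rad_of_eq_one hj]; ring)

def fejerSum (n : ℕ) (x : WG) : ℝ := ∑ k ∈ range n, Dw (k + 1) x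

lemma natCast_mul_Kw (n : ℕ) (x : WG) : n * Kw n x = fejerSum n x := by
  have hsum : ∑ k ∈ Icc 1 n, Dw k x = fejerSum n x := by
    rw [fejerSum, range_eq_Ico, sum_Ico_add' (Dw · x) 0 n 1]
    rfl
  rcases eq_or_ne n 0 with rfl | hn
  · simp [fejerSum]
  · rw [Kw, hsum]
    field_simp

lemma fejerSum_two_pow_add {i l : ℕ} (hl : l ≤ 2 ^ i) (x : WG) :
    fejerSum (2 ^ i + l) x = fejerSum (2 ^ i) x + l * Dw (2 ^ i) x + rad i x * fejerSum l x := by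
  have hD : ∀ k ∈ range l, Dw (2 ^ i + k + 1) x = Dw (2 ^ i) x + rad i x * Dw (k + 1) x :=
    fun k hk => by rw [add_assoc, Dw_two_pow_add ((mem_range.1 hk).trans_le hl)]
  rw [fejerSum, sum_range_add, sum_congr rfl hD, sum_add_distrib, sum_const, card_range,
    nsmul_eq_mul, ← mul_sum, fejerSum, fejerSum, add_assoc]

lemma fejerSum_two_pow_succ (i : ℕ) (x : WG) :
    fejerSum (2 ^ (i + 1)) x = (1 + rad i x) * fejerSum (2 ^ i) x + 2 ^ i * Dw (2 ^ i) x := by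
  rw [pow_succ, mul_two, fejerSum_two_pow_add le_rfl]
  push_cast
  ring

lemma fejerSum_le_sq (n : ℕ) (x : WG) : fejerSum n x ≤ n ^ 2 := by
  have hD : ∀ k ∈ range n, Dw (k + 1) x ≤ n := fun k hk =>
    (Dw_le _ x).trans (by exact_mod_cast mem_range.1 hk)
  rw [fejerSum]
  simpa [sq] using sum_le_card_nsmul _ _ _ hD

lemma fejerSum_two_pow_of_single {i j : ℕ} {x : WG} (hj : x j = 1)
    (h0 : ∀ k < i, k ≠ j → x k = 0) (hji : j < i) : fejerSum (2 ^ i) x = 2 ^ (i - 1 + j) := by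
  induction i, hji using Nat.le_induction with
  | base =>
    rw [fejerSum_two_pow_succ, rad_of_eq_one hj,
      Dw_two_pow_of_forall_eq_zero fun k hk => h0 k (by omega) hk.ne, ← pow_add]
    simp
  | succ i hi ih =>
    rw [fejerSum_two_pow_succ, rad_of_eq_zero (h0 i (by omega) (by omega)),
      Dw_two_pow_eq_zero hj hi, ih fun k hk => h0 k (by omega),
      show i + 1 - 1 + j = i - 1 + j + 1 by omega, pow_succ]
    ring

lemma fejerSum_two_pow_eq_zero {i j k : ℕ} {x : WG} (hj : x j = 1) (hk : x k = 1) (hjk : j < k)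
    (hki : k < i) : fejerSum (2 ^ i) x = 0 := by
  induction i, hki using Nat.le_induction with
  | base => rw [fejerSum_two_pow_succ, rad_of_eq_one hk, Dw_two_pow_eq_zero hj hjk]; ring
  | succ i hi ih => rw [fejerSum_two_pow_succ, ih, Dw_two_pow_eq_zero hj (by omega)]; ring

lemma qq_succ (t : ℕ) : qq (t + 1) = 2 ^ (2 * t + 2) + qq t := by
  rw [qq, sum_range_succ, add_comm, ← qq, show 2 * t + 2 = 2 * (t + 1) by ring, pow_mul]
  norm_num

lemma three_mul_qq_add_one (t : ℕ) : 3 * qq t + 1 = 2 ^ (2 * t + 2) := by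
  induction t with
  | zero => rfl
  | succ t ih =>
    rw [qq_succ, show 2 * (t + 1) + 2 = 2 * t + 2 + 2 by ring, pow_add _ (2 * t + 2)]
    omega

lemma fejerSum_qq_succ (t : ℕ) (x : WG) :
    fejerSum (qq (t + 1)) x = fejerSum (2 ^ (2 * t + 2)) x + qq t * Dw (2 ^ (2 * t + 2)) x
      + rad (2 * t + 2) x * fejerSum (qq t) x := by
  have hlt : qq t ≤ 2 ^ (2 * t + 2) := by have := three_mul_qq_add_one t; omega
  rw [qq_succ, fejerSum_two_pow_add hlt]

section PointOfInterval

variable {m s : ℕ} {x : WG}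

lemma abs_fejerSum_qq_of_le (hm : x (2 * m) = 1) (hs : x (2 * s) = 1) (hms : m < s) {t : ℕ}
    (hst : s ≤ t) : |fejerSum (qq t) x| = |fejerSum (qq s) x| := by
  induction t, hst using Nat.le_induction with
  | base => rfl
  | succ t ht ih =>
    rw [fejerSum_qq_succ, fejerSum_two_pow_eq_zero hm hs (by omega) (by omega),
      Dw_two_pow_eq_zero hm (by omega), mul_zero, add_zero, zero_add, abs_mul, abs_rad, one_mul, ih]

variable (hm : x (2 * m) = 1) (h0 : ∀ k < 2 * s, k ≠ 2 * m → x k = 0)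
include hm h0

lemma fejerSum_qq_le {t : ℕ} (hmt : m ≤ t) (hts : t < s) :
    6 * fejerSum (qq t) x ≤ 6 * qq m ^ 2 + 2 ^ (2 * m + 2 * t + 2) := by
  induction t, hmt using Nat.le_induction with
  | base =>
    have hpos : (0 : ℝ) < 2 ^ (2 * m + 2 * m + 2) := by positivity
    linarith [fejerSum_le_sq (qq m) x]
  | succ t hmt ih =>
    rw [fejerSum_qq_succ, rad_of_eq_zero (h0 _ (by omega) (by omega)),
      Dw_two_pow_eq_zero hm (by omega),
      fejerSum_two_pow_of_single hm (fun k hk => h0 k (by omega)) (by omega)]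
    have hpow : (2 : ℝ) ^ (2 * m + 2 * (t + 1) + 2) = 4 * 2 ^ (2 * m + 2 * t + 2) := by ring
    have hpow' : (2 : ℝ) ^ (2 * t + 2 - 1 + 2 * m) = 2 ^ (2 * m + 2 * t + 2) / 2 := by
      rw [show 2 * m + 2 * t + 2 = 2 * t + 2 - 1 + 2 * m + 1 by omega, pow_succ]; ring
    linarith [ih (by omega)]

lemma pow_le_fejerSum_qq (hs : x (2 * s) = 1) (hms : m + 2 ≤ s) :
    (2 : ℝ) ^ (2 * m + 2 * s - 3) ≤ fejerSum (qq s) x := by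
  obtain ⟨t, rfl⟩ : ∃ t, s = t + 1 := ⟨s - 1, by omega⟩
  have hprev := fejerSum_qq_le hm h0 (t := t) (by omega) (by omega)
  rw [fejerSum_qq_succ, rad_of_eq_one (show x (2 * t + 2) = 1 from hs),
    Dw_two_pow_eq_zero hm (by omega),
    fejerSum_two_pow_of_single hm (fun k hk => h0 k (by omega)) (by omega)]
  set P : ℝ := 2 ^ (2 * m + 2 * t + 2)
  have hlhs : (2 : ℝ) ^ (2 * m + 2 * (t + 1) - 3) * 8 = P := by
    rw [show (8 : ℝ) = 2 ^ 3 by norm_num, ← pow_add]; congr 1; omega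
  have hnew : (2 : ℝ) ^ (2 * t + 2 - 1 + 2 * m) * 2 = P := by
    rw [← pow_succ]; congr 1; omega
  have hq : (3 * qq m + 1 : ℝ) = 2 ^ (2 * m + 2) := by exact_mod_cast three_mul_qq_add_one m
  -- `q_m² < 2^{4m+4} / 9 ≤ P / 9`, as `s ≥ m + 2`
  have hqP : ((2 : ℝ) ^ (2 * m + 2)) ^ 2 ≤ P := by
    rw [← pow_mul]; exact pow_le_pow_right₀ one_le_two (by omega)
  nlinarith [(qq m).cast_nonneg (α := ℝ)]

end PointOfInterval

theorem fejer_kernel_lower_bound_general (A : ℕ) (m s : ℕ)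
    (hs1 : m + 2 ≤ s) (hs2 : s ≤ A - 1) (x : WG)
    (hx2m : x (2 * m) = 1) (hx2s : x (2 * s) = 1)
    (hx0 : ∀ j < 2 * s, j ≠ 2 * m → x j = 0) :
    (2 : ℝ) ^ (2 * m + 2 * s - 3) ≤ (qq (A - 1) : ℝ) * |Kw (qq (A - 1)) x| := by
  calc (2 : ℝ) ^ (2 * m + 2 * s - 3) ≤ fejerSum (qq s) x := pow_le_fejerSum_qq hx2m hx0 hx2s hs1
    _ ≤ |fejerSum (qq (A - 1)) x| := by
      rw [abs_fejerSum_qq_of_le hx2m hx2s (by omega) hs2]; exact le_abs_self _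
    _ = qq (A - 1) * |Kw (qq (A - 1)) x| := by
      rw [← natCast_mul_Kw, abs_mul, Nat.abs_cast]

/-- Goginava's lower bound for the Walsh-Fejér kernel at `q_{A-1}`. -/
theorem fejer_kernel_lower_bound (A : ℕ) (hA : 2 < A) (m s : ℕ)
    (hm : m ≤ A - 3) (hs1 : m + 2 ≤ s) (hs2 : s ≤ A - 1) (x : WG)
    (hx2m : x (2 * m) = 1) (hx2s : x (2 * s) = 1)
    (hx0 : ∀ j < 2 * s, j ≠ 2 * m → x j = 0) :
    (2 : ℝ) ^ (2 * m + 2 * s - 3) ≤ (qq (A - 1) : ℝ) * |Kw (qq (A - 1)) x| :=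
  fejer_kernel_lower_bound_general A m s hs1 hs2 x hx2m hx2s hx0

end
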